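/- arXiv:1203.6152 — 3 statements merged into one kernel-verified Lean document; each statement's English description precedes it below -/
import Mathlib

section
/- If M is a finite monoid, s, x, y ∈ M, s is R-equivalent to sx, and x ∼_K y, then sx = sy, where x ∼_K y means: for every idempotent e ∈ M, either both ex and ey are strictly J-below e, or ex = ey. -/
variable {M : Type*}

def rLe [Monoid M] (u v : M) : Prop := ∃ q, u = v * q
def rEq [Monoid M] (u v : M) : Prop := rLe u v ∧ rLe v u
def jLe [Monoid M] (u v : M) : Prop := ∃ p q, u = p * v * q
def jLt [Monoid M] (u v : M) : Prop := jLe u v ∧ ¬ jLe v u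
def simK [Monoid M] (x y : M) : Prop :=
  ∀ e : M, e * e = e → (jLt (e * x) e ∧ jLt (e * y) e) ∨ e * x = e * y

lemma exists_idem_pow [Monoid M] [Finite M] (a : M) :
    ∃ n, 1 ≤ n ∧ a ^ n * a ^ n = a ^ n := by
  obtain ⟨i, j, hij, h⟩ := Finite.exists_ne_map_eq_of_infinite (fun n : ℕ => a ^ n)
  wlog hlt : i < j generalizing i j
  · exact this j i hij.symm h.symm (by omega)
  set d := j - i with hd
  have hd1 : 1 ≤ d := by omega
  have step : ∀ m, i ≤ m → a ^ (m + d) = a ^ m := by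
    intro m hm
    have : a ^ (m + d) = a ^ (m - i) * a ^ j := by
      rw [← pow_add]; congr 1; omega
    rw [this, ← h, ← pow_add]
    congr 1; omega
  have rep : ∀ k m, i ≤ m → a ^ (m + k * d) = a ^ m := by
    intro k
    induction k with
    | zero => simp
    | succ k ih =>
      intro m hm
      have : m + (k + 1) * d = (m + d) + k * d := by ring
      rw [this, ih _ (by omega), step m hm]
  refine ⟨(i + 1) * d, by nlinarith, ?_⟩
  rw [← pow_add]
  have : (i + 1) * d + (i + 1) * d = (i + 1) * d + (i + 1) * d := rfl
  exact rep (i + 1) ((i + 1) * d) (by nlinarith)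

theorem stmt0 [Monoid M] [Finite M] (s x y : M)
    (hR : rEq s (s * x)) (hK : simK x y) : s * x = s * y := by
  obtain ⟨⟨q, hq⟩, _⟩ := hR
  -- s = s * x * q, so s = s * (x*q)^n
  have hs : ∀ n, s = s * (x * q) ^ n := by
    intro n
    induction n with
    | zero => simp
    | succ n ih =>
      calc s = s * x * q := hq
        _ = (s * (x * q) ^ n) * x * q := by rw [← ih]
        _ = s * (x * q) ^ (n + 1) := by rw [pow_succ]; group
  obtain ⟨n, hn1, hidem⟩ := exists_idem_pow (x * q)
  set e := (x * q) ^ n with he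
  have hse : s = s * e := hs n
  rcases hK e hidem with ⟨⟨_, hne⟩, _⟩ | heq
  · exfalso
    apply hne
    -- e = 1 * (e * x) * (q * (x*q)^(n-1))
    refine ⟨1, q * (x * q) ^ (n - 1), ?_⟩
    have : e * x * (q * (x * q) ^ (n - 1)) = e * (x * q) ^ n := by
      rw [he]
      have h1 : (x * q) ^ n = (x * q) * (x * q) ^ (n - 1) := by
        rw [← pow_succ']; congr 1; omega
      rw [h1]; group
    rw [one_mul, this, ← he, hidem]
  · calc s * x = s * e * x := by rw [← hse]
      _ = s * (e * x) := by rw [mul_assoc]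
      _ = s * (e * y) := by rw [heq]
      _ = s * y := by rw [← mul_assoc, ← hse]
end

section
/- Let M be a finite monoid in DA, i.e., satisfying (xy)^ω x (xy)^ω = (xy)^ω for all x, y ∈ M, where ω is an exponent such that z^ω is idempotent for all z ∈ M. Let φ : A* → M be a monoid morphism from the free monoid over a finite alphabet A, and let x, y, z ∈ A* be words with φ(x) R-equivalent to φ(xy) and alph(z) ⊆ alph(y). Then φ(x) is R-equivalent to φ(xz). -/
/-!
Write `s = φ x` and `t = φ y`, so that `s = s * t * q` for some `q`, and put `e = (t * q) ^ ω`.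
Then `s = s * e`, and in `DA` every factor `m` of `t * q` satisfies `e * m * e = e`; this applies to
the image `a` of every letter of `y`. Hence `s = s * a * e` and `s * a = s * a * t * (q * e * a)`:
appending `a` keeps `s` in its `R`-class and preserves the hypothesis `s ≤_R s * t`, so the letters
of `z` can be appended one at a time.
-/

variable {M : Type*}

section

variable [Monoid M]

theorem rLe.refl (u : M) : rLe u u := ⟨1, (mul_one u).symm⟩

theorem rLe.trans {u v w : M} (huv : rLe u v) (hvw : rLe v w) : rLe u w := by
  obtain ⟨p, rfl⟩ := huv
  obtain ⟨q, rfl⟩ := hvw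
  exact ⟨q * p, mul_assoc _ _ _⟩

theorem rLe_mul_right (u v : M) : rLe (u * v) u := ⟨v, rfl⟩

theorem rEq.refl (u : M) : rEq u u := ⟨rLe.refl u, rLe.refl u⟩

theorem rEq.trans {u v w : M} (huv : rEq u v) (hvw : rEq v w) : rEq u w :=
  ⟨huv.1.trans hvw.1, hvw.2.trans huv.2⟩

theorem mul_pow_eq_self {s w : M} (h : s * w = s) (n : ℕ) : s * w ^ n = s := by
  induction n with
  | zero => simp
  | succ n ih => rw [pow_succ, ← mul_assoc, ih, h]

end

namespace DA

variable [Monoid M] {ω : ℕ} (hω : ∀ z : M, z ^ ω * z ^ ω = z ^ ω)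
  (hDA : ∀ x y : M, (x * y) ^ ω * x * (x * y) ^ ω = (x * y) ^ ω)
include hDA

theorem sandwich_left {e u v : M} (h : e * u * v * e = e) : e * u * e = e := by
  have hf : (e * u * v) ^ ω * e = e := by
    rw [mul_assoc e u v, mul_pow_mul]
    exact mul_pow_eq_self (by rw [← mul_assoc, ← mul_assoc, h]) ω
  calc e * u * e = (e * u * v) ^ ω * e * u * ((e * u * v) ^ ω * e) := by rw [hf]
    _ = (e * u * v) ^ ω * (e * u) * (e * u * v) ^ ω * e := by simp only [mul_assoc]
    _ = e := by rw [hDA, hf]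

include hω

theorem pow_succ_eq_pow (m : M) : m ^ (ω + 1) = m ^ ω := by
  calc m ^ (ω + 1) = m * (m ^ ω * m ^ ω) := by rw [hω, pow_succ']
    _ = m ^ ω * m * m ^ ω := by rw [← mul_assoc, ← pow_succ', pow_succ]
    _ = m ^ ω := by simpa using hDA m 1

theorem pow_mul_self (m : M) : m * m ^ ω = m ^ ω := by
  rw [← pow_succ', pow_succ_eq_pow hω hDA]

theorem pow_mul_right_mul_pow (x y : M) : (x * y) ^ ω * y * (x * y) ^ ω = (x * y) ^ ω := by
  -- aperiodicity turns `(x * y) ^ ω` into `x * (y * x) ^ ω * y`, reducing to the identity for `y * x`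
  have hconj : (x * y) ^ ω = x * (y * x) ^ ω * y := by
    rw [← pow_succ_eq_pow hω hDA, pow_succ, ← mul_assoc, mul_pow_mul]
  have hf : (y * x) ^ ω * y * (y * x) * (y * x) ^ ω = (y * x) ^ ω := by
    rw [mul_assoc _ (y * x), pow_mul_self hω hDA, hDA]
  rw [hconj]
  calc x * (y * x) ^ ω * y * y * (x * (y * x) ^ ω * y)
      = x * ((y * x) ^ ω * y * (y * x) * (y * x) ^ ω) * y := by simp only [mul_assoc]
    _ = x * (y * x) ^ ω * y := by rw [hf, mul_assoc]

theorem sandwich_right {e u v : M} (h : e * u * v * e = e) : e * v * e = e := by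
  have hg : e * (u * (v * e)) ^ ω = e :=
    mul_pow_eq_self (by rw [← mul_assoc, ← mul_assoc, h]) ω
  calc e * v * e = e * v * e * (u * (v * e)) ^ ω := by rw [mul_assoc (e * v), hg]
    _ = e * (u * (v * e)) ^ ω * (v * e) * (u * (v * e)) ^ ω := by rw [hg, mul_assoc e v]
    _ = e * ((u * (v * e)) ^ ω * (v * e) * (u * (v * e)) ^ ω) := by simp only [mul_assoc]
    _ = e := by rw [pow_mul_right_mul_pow hω hDA, hg]

theorem pow_mul_factor_mul_pow (p m r : M) :
    (p * m * r) ^ ω * m * (p * m * r) ^ ω = (p * m * r) ^ ω := by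
  have h : (p * m * r) ^ ω * (p * m) * r * (p * m * r) ^ ω = (p * m * r) ^ ω := by
    rw [mul_assoc _ (p * m) r, mul_assoc _ (p * m * r), pow_mul_self hω hDA, hω]
  have hpm := sandwich_left hDA h
  rw [← mul_assoc] at hpm
  exact sandwich_right hω hDA hpm

theorem rEq_mul_and_rLe_mul {s t u a v : M} (hs : rLe s (s * t)) (ht : t = u * a * v) :
    rEq s (s * a) ∧ rLe (s * a) (s * a * t) := by
  obtain ⟨q, hq⟩ := hs
  have hae : (t * q) ^ ω * a * (t * q) ^ ω = (t * q) ^ ω := by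
    rw [ht, mul_assoc (u * a)]
    exact pow_mul_factor_mul_pow hω hDA u a (v * q)
  set e := (t * q) ^ ω
  have hse : s * e = s := mul_pow_eq_self (by rw [← mul_assoc]; exact hq.symm) ω
  have hsae : s * a * e = s := by
    calc s * a * e = s * e * a * e := by rw [hse]
      _ = s * (e * a * e) := by simp only [mul_assoc]
      _ = s := by rw [hae, hse]
  refine ⟨⟨⟨e, hsae.symm⟩, rLe_mul_right s a⟩, ⟨q * e * a, ?_⟩⟩
  calc s * a = s * a * (t * q * e) * a := by rw [pow_mul_self hω hDA, hsae]
    _ = s * a * t * (q * e * a) := by simp only [mul_assoc]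

theorem rEq_mul_prod {s t : M} (hs : rLe s (s * t)) (l : List M)
    (hl : ∀ a ∈ l, ∃ u v, t = u * a * v) : rEq s (s * l.prod) := by
  induction l generalizing s with
  | nil => simpa using rEq.refl s
  | cons a l ih =>
    obtain ⟨u, v, ht⟩ := hl a List.mem_cons_self
    obtain ⟨hsa, hsat⟩ := rEq_mul_and_rLe_mul hω hDA hs ht
    have hrest := ih hsat fun b hb => hl b (List.mem_cons_of_mem a hb)
    rw [List.prod_cons, ← mul_assoc]
    exact hsa.trans hrest

end DA

theorem FreeMonoid.exists_eq_mul_of_mem_toList {A : Type*} {y : FreeMonoid A} {a : A}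
    (ha : a ∈ FreeMonoid.toList y) : ∃ u v, y = u * FreeMonoid.of a * v := by
  obtain ⟨l₁, l₂, h⟩ := List.append_of_mem ha
  refine ⟨FreeMonoid.ofList l₁, FreeMonoid.ofList l₂, ?_⟩
  rw [← FreeMonoid.ofList_toList y, h, FreeMonoid.ofList_append, FreeMonoid.ofList_cons, mul_assoc]

theorem stmt5_general {A : Type*} [Monoid M] (ω : ℕ)
    (hω : ∀ z : M, z ^ ω * z ^ ω = z ^ ω)
    (hDA : ∀ x y : M, (x * y) ^ ω * x * (x * y) ^ ω = (x * y) ^ ω)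
    (φ : FreeMonoid A →* M) (x y z : FreeMonoid A)
    (hR : rEq (φ x) (φ (x * y)))
    (halph : ∀ a : A, a ∈ FreeMonoid.toList z → a ∈ FreeMonoid.toList y) :
    rEq (φ x) (φ (x * z)) := by
  have hxy : rLe (φ x) (φ x * φ y) := by simpa only [map_mul] using hR.1
  have hz : φ z = ((FreeMonoid.toList z).map (φ ∘ FreeMonoid.of)).prod := by
    rw [← FreeMonoid.lift_apply, FreeMonoid.lift_restrict]
  rw [map_mul, hz]
  refine DA.rEq_mul_prod hω hDA hxy _ fun m hm => ?_
  obtain ⟨a, ha, rfl⟩ := List.mem_map.mp hm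
  obtain ⟨u, v, rfl⟩ := FreeMonoid.exists_eq_mul_of_mem_toList (halph a ha)
  exact ⟨φ u, φ v, by simp only [map_mul, Function.comp_apply]⟩

theorem stmt5 {A : Type*} [Monoid M] [Finite M] (ω : ℕ)
    (hω : ∀ z : M, z ^ ω * z ^ ω = z ^ ω)
    (hDA : ∀ x y : M, (x * y) ^ ω * x * (x * y) ^ ω = (x * y) ^ ω)
    (φ : FreeMonoid A →* M) (x y z : FreeMonoid A)
    (hR : rEq (φ x) (φ (x * y)))
    (halph : ∀ a : A, a ∈ FreeMonoid.toList z → a ∈ FreeMonoid.toList y) :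
    rEq (φ x) (φ (x * z)) :=
  stmt5_general ω hω hDA φ x y z hR halph
end

section
/- Let M be a finite monoid satisfying the identity (xy)^ω x (xy)^ω = (xy)^ω (i.e., M ∈ DA). Then the quotient M/∼_LI is a commutative idempotent monoid, where x ∼_LI y iff for all idempotents e, f ∈ M with e J-equivalent to f, either exf and eyf are both strictly J-below e, or exf = eyf. -/
variable {M : Type*}

def jEq [Monoid M] (u v : M) : Prop := jLe u v ∧ jLe v u
def simLI [Monoid M] (x y : M) : Prop :=
  ∀ e f : M, e * e = e → f * f = f → jEq e f →
    (jLt (e * x * f) e ∧ jLt (e * y * f) e) ∨ e * x * f = e * y * f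

section DA

variable [Monoid M]

/-- Aperiodicity: `z^ω * z = z^ω`. -/
private lemma aper (ω : ℕ)
    (hω : ∀ z : M, z ^ ω * z ^ ω = z ^ ω)
    (hDA : ∀ x y : M, (x * y) ^ ω * x * (x * y) ^ ω = (x * y) ^ ω)
    (z : M) : z ^ ω * z = z ^ ω := by
  have h := hDA z 1
  rw [mul_one] at h
  have hc : z ^ ω * z = z * z ^ ω := (pow_succ z ω).symm.trans (pow_succ' z ω)
  calc z ^ ω * z = (z ^ ω * z ^ ω) * z := by rw [hω]
    _ = z ^ ω * (z ^ ω * z) := by rw [mul_assoc]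
    _ = z ^ ω * (z * z ^ ω) := by rw [hc]
    _ = z ^ ω * z * z ^ ω := by rw [mul_assoc]
    _ = z ^ ω := h

private lemma conjpow (x y : M) (n : ℕ) : x * (y * x) ^ n = (x * y) ^ n * x := by
  induction n with
  | zero => simp
  | succ n ih =>
    calc x * (y * x) ^ (n + 1) = x * ((y * x) ^ n * (y * x)) := by rw [pow_succ]
      _ = (x * (y * x) ^ n) * (y * x) := by rw [← mul_assoc]
      _ = ((x * y) ^ n * x) * (y * x) := by rw [ih]
      _ = ((x * y) ^ n * (x * y)) * x := by simp only [mul_assoc]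
      _ = (x * y) ^ (n + 1) * x := by rw [← pow_succ]

/-- Dual DA identity: `(xy)^ω * y * (xy)^ω = (xy)^ω`. -/
private lemma dualId (ω : ℕ)
    (hω : ∀ z : M, z ^ ω * z ^ ω = z ^ ω)
    (hDA : ∀ x y : M, (x * y) ^ ω * x * (x * y) ^ ω = (x * y) ^ ω)
    (x y : M) : (x * y) ^ ω * y * (x * y) ^ ω = (x * y) ^ ω := by
  have h1 : x * (y * x) ^ ω = (x * y) ^ ω * x := conjpow x y ω
  have h2 : y * (x * y) ^ ω = (y * x) ^ ω * y := conjpow y x ω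
  have h3 : (x * y) ^ ω * (x * y) = (x * y) ^ ω := aper ω hω hDA (x * y)
  have h4 : (y * x) ^ ω * y * (y * x) ^ ω = (y * x) ^ ω := hDA y x
  have hA : (x * y) ^ ω * (y * x) ^ ω = (x * y) ^ ω * x := by
    calc (x * y) ^ ω * (y * x) ^ ω
        = ((x * y) ^ ω * (x * y)) * (y * x) ^ ω := by rw [h3]
      _ = ((x * y) ^ ω * x) * (y * (y * x) ^ ω) := by simp only [mul_assoc]
      _ = (x * (y * x) ^ ω) * (y * (y * x) ^ ω) := by rw [h1]
      _ = x * ((y * x) ^ ω * y * (y * x) ^ ω) := by simp only [mul_assoc]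
      _ = x * (y * x) ^ ω := by rw [h4]
      _ = (x * y) ^ ω * x := h1
  calc (x * y) ^ ω * y * (x * y) ^ ω
      = (x * y) ^ ω * (y * (x * y) ^ ω) := by rw [mul_assoc]
    _ = (x * y) ^ ω * ((y * x) ^ ω * y) := by rw [h2]
    _ = ((x * y) ^ ω * (y * x) ^ ω) * y := by rw [← mul_assoc]
    _ = ((x * y) ^ ω * x) * y := by rw [hA]
    _ = (x * y) ^ ω * (x * y) := by rw [mul_assoc]
    _ = (x * y) ^ ω := h3

/-- Key lemma: `u = r*u*v` implies `u*v = u` and `r*u = u`. -/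
private lemma lemH (ω : ℕ)
    (hω : ∀ z : M, z ^ ω * z ^ ω = z ^ ω)
    (hDA : ∀ x y : M, (x * y) ^ ω * x * (x * y) ^ ω = (x * y) ^ ω)
    (u r v : M) (h : u = r * u * v) : u * v = u ∧ r * u = u := by
  have key : ∀ n : ℕ, u = r ^ n * u * v ^ n := by
    intro n
    induction n with
    | zero => simp
    | succ n ih =>
      calc u = r * u * v := h
        _ = r * (r ^ n * u * v ^ n) * v := by rw [← ih]
        _ = r ^ (n + 1) * u * v ^ (n + 1) := by
            rw [pow_succ' r n, pow_succ v n]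
            simp only [mul_assoc]
  have kω := key ω
  have h6 : u * v ^ ω = u := by
    calc u * v ^ ω = (r ^ ω * u * v ^ ω) * v ^ ω := by rw [← kω]
      _ = r ^ ω * u * (v ^ ω * v ^ ω) := by simp only [mul_assoc]
      _ = r ^ ω * u * v ^ ω := by rw [hω]
      _ = u := kω.symm
  have h7 : r ^ ω * u = u := by
    calc r ^ ω * u = r ^ ω * (r ^ ω * u * v ^ ω) := by rw [← kω]
      _ = (r ^ ω * r ^ ω) * u * v ^ ω := by simp only [mul_assoc]
      _ = r ^ ω * u * v ^ ω := by rw [hω]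
      _ = u := kω.symm
  constructor
  · calc u * v = (u * v ^ ω) * v := by rw [h6]
      _ = u * (v ^ ω * v) := by rw [mul_assoc]
      _ = u * v ^ ω := by rw [aper ω hω hDA v]
      _ = u := h6
  · have hc : r * r ^ ω = r ^ ω * r := (pow_succ' r ω).symm.trans (pow_succ r ω)
    calc r * u = r * (r ^ ω * u) := by rw [h7]
      _ = (r * r ^ ω) * u := by rw [← mul_assoc]
      _ = (r ^ ω * r) * u := by rw [hc]
      _ = r ^ ω * u := by rw [aper ω hω hDA r]
      _ = u := h7

/-- Right extraction (D3): from `e*(a*b) = e` get `e*(b*(a*b)^ω) = e`. -/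
private lemma d3R (ω : ℕ)
    (hω : ∀ z : M, z ^ ω * z ^ ω = z ^ ω)
    (hDA : ∀ x y : M, (x * y) ^ ω * x * (x * y) ^ ω = (x * y) ^ ω)
    (e a b : M) (h : e * (a * b) = e) : e * (b * (a * b) ^ ω) = e := by
  have key : ∀ n : ℕ, e * (a * b) ^ n = e := by
    intro n
    induction n with
    | zero => simp
    | succ n ih =>
      calc e * (a * b) ^ (n + 1) = e * ((a * b) * (a * b) ^ n) := by rw [pow_succ']
        _ = (e * (a * b)) * (a * b) ^ n := by rw [← mul_assoc]
        _ = e * (a * b) ^ n := by rw [h]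
        _ = e := ih
  have hd : (a * b) ^ ω * b * (a * b) ^ ω = (a * b) ^ ω := dualId ω hω hDA a b
  calc e * (b * (a * b) ^ ω) = (e * (a * b) ^ ω) * (b * (a * b) ^ ω) := by rw [key ω]
    _ = e * ((a * b) ^ ω * b * (a * b) ^ ω) := by simp only [mul_assoc]
    _ = e * (a * b) ^ ω := by rw [hd]
    _ = e := key ω

/-- Left extraction: from `(a*b)*g = g` get `((a*b)^ω*a)*g = g`. -/
private lemma d3L (ω : ℕ)
    (hω : ∀ z : M, z ^ ω * z ^ ω = z ^ ω)
    (hDA : ∀ x y : M, (x * y) ^ ω * x * (x * y) ^ ω = (x * y) ^ ω)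
    (g a b : M) (h : (a * b) * g = g) : ((a * b) ^ ω * a) * g = g := by
  have key : ∀ n : ℕ, (a * b) ^ n * g = g := by
    intro n
    induction n with
    | zero => simp
    | succ n ih =>
      calc (a * b) ^ (n + 1) * g = ((a * b) ^ n * (a * b)) * g := by rw [pow_succ]
        _ = (a * b) ^ n * ((a * b) * g) := by rw [mul_assoc]
        _ = (a * b) ^ n * g := by rw [h]
        _ = g := ih
  calc ((a * b) ^ ω * a) * g = ((a * b) ^ ω * a) * ((a * b) ^ ω * g) := by rw [key ω]
    _ = ((a * b) ^ ω * a * (a * b) ^ ω) * g := by simp only [mul_assoc]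
    _ = (a * b) ^ ω * g := by rw [hDA a b]
    _ = g := key ω

/-- An element sandwich-expressible through itself is idempotent. -/
private lemma sqs (ω : ℕ)
    (hω : ∀ z : M, z ^ ω * z ^ ω = z ^ ω)
    (hDA : ∀ x y : M, (x * y) ^ ω * x * (x * y) ^ ω = (x * y) ^ ω)
    (a κ : M) (h : a = a * κ * a) : a * a = a := by
  have hka : a * (κ * a) = a := by rw [← mul_assoc]; exact h.symm
  have key : ∀ n : ℕ, a * (κ * a) ^ n = a := by
    intro n
    induction n with
    | zero => simp
    | succ n ih =>
      calc a * (κ * a) ^ (n + 1) = a * ((κ * a) * (κ * a) ^ n) := by rw [pow_succ']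
        _ = (a * (κ * a)) * (κ * a) ^ n := by rw [← mul_assoc]
        _ = a * (κ * a) ^ n := by rw [hka]
        _ = a := ih
  have hN := key ω
  have hNaN : (κ * a) ^ ω * a * (κ * a) ^ ω = (κ * a) ^ ω := dualId ω hω hDA κ a
  calc a * a = (a * (κ * a) ^ ω) * (a * (κ * a) ^ ω) := by rw [hN]
    _ = a * ((κ * a) ^ ω * a * (κ * a) ^ ω) := by simp only [mul_assoc]
    _ = a * (κ * a) ^ ω := by rw [hNaN]
    _ = a := hN

/-- Any element J-equivalent to an idempotent is idempotent. -/
private lemma idemJ (ω : ℕ)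
    (hω : ∀ z : M, z ^ ω * z ^ ω = z ^ ω)
    (hDA : ∀ x y : M, (x * y) ^ ω * x * (x * y) ^ ω = (x * y) ^ ω)
    {e a p q c d : M} (he : e * e = e) (h1 : a = p * e * q) (h2 : e = c * a * d) :
    a * a = a := by
  have k1 : a = (p * c) * a * (d * (c * (a * (d * q)))) := by
    calc a = p * e * q := h1
      _ = p * (e * e) * q := by rw [he]
      _ = p * ((c * a * d) * (c * a * d)) * q := by rw [← h2]
      _ = (p * c) * a * (d * (c * (a * (d * q)))) := by simp only [mul_assoc]
  have k2 := (lemH ω hω hDA a (p * c) (d * (c * (a * (d * q)))) k1).1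
  have k3 : a = (a * (d * c)) * a * (d * q) := by
    calc a = a * (d * (c * (a * (d * q)))) := k2.symm
      _ = (a * (d * c)) * a * (d * q) := by simp only [mul_assoc]
  have k4 := (lemH ω hω hDA a (a * (d * c)) (d * q) k3).2
  exact sqs ω hω hDA a (d * c) k4.symm

private lemma lzLem (ω : ℕ)
    (hω : ∀ z : M, z ^ ω * z ^ ω = z ^ ω)
    (hDA : ∀ x y : M, (x * y) ^ ω * x * (x * y) ^ ω = (x * y) ^ ω)
    (z g l m : M) (hz : z * z = z) (h1 : z = l * g) (h2 : g = m * z) :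
    g * z = g := by
  have k : g = (m * l) * g * (l * g) := by
    calc g = m * z := h2
      _ = m * (z * z) := by rw [hz]
      _ = m * ((l * g) * (l * g)) := by rw [← h1]
      _ = (m * l) * g * (l * g) := by simp only [mul_assoc]
  have hk := (lemH ω hω hDA g (m * l) (l * g) k).1
  calc g * z = g * (l * g) := by rw [h1]
    _ = g := hk

private lemma rzLem (ω : ℕ)
    (hω : ∀ z : M, z ^ ω * z ^ ω = z ^ ω)
    (hDA : ∀ x y : M, (x * y) ^ ω * x * (x * y) ^ ω = (x * y) ^ ω)
    (z g ρ m : M) (hz : z * z = z) (h1 : z = g * ρ) (h2 : g = z * m) :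
    z * g = g := by
  have k : g = (g * ρ) * g * (ρ * m) := by
    calc g = z * m := h2
      _ = (z * z) * m := by rw [hz]
      _ = ((g * ρ) * (g * ρ)) * m := by rw [← h1]
      _ = (g * ρ) * g * (ρ * m) := by simp only [mul_assoc]
  have hk := (lemH ω hω hDA g (g * ρ) (ρ * m) k).2
  rw [h1]; exact hk

/-- Rectangular band lemma: `g*h*g = g` for mutually J-expressible idempotent g. -/
private lemma rbLem (ω : ℕ)
    (hω : ∀ z : M, z ^ ω * z ^ ω = z ^ ω)
    (hDA : ∀ x y : M, (x * y) ^ ω * x * (x * y) ^ ω = (x * y) ^ ω)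
    {g h α β γ δ : M} (hg : g * g = g)
    (h1 : g = α * h * β) (h2 : h = γ * g * δ) : g * h * g = g := by
  have ha : g = (α * γ) * g * (δ * β) := by
    calc g = α * h * β := h1
      _ = α * (γ * g * δ) * β := by rw [h2]
      _ = (α * γ) * g * (δ * β) := by simp only [mul_assoc]
  have e1 := lemH ω hω hDA g (α * γ) (δ * β) ha
  have hz1 : (γ * g) * (γ * g) = γ * g :=
    idemJ ω hω hDA hg (show γ * g = γ * g * 1 by rw [mul_one])
      (show g = α * (γ * g) * 1 by rw [mul_one, ← mul_assoc]; exact e1.2.symm)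
  have e3 : g * (γ * g) = g :=
    lzLem ω hω hDA (γ * g) g γ α hz1 rfl
      (show g = α * (γ * g) by rw [← mul_assoc]; exact e1.2.symm)
  have hz2 : (g * δ) * (g * δ) = g * δ :=
    idemJ ω hω hDA hg (show g * δ = 1 * g * δ by rw [one_mul])
      (show g = 1 * (g * δ) * β by rw [one_mul, mul_assoc]; exact e1.1.symm)
  have e4 : (g * δ) * g = g :=
    rzLem ω hω hDA (g * δ) g δ β hz2 rfl
      (show g = (g * δ) * β by rw [mul_assoc]; exact e1.1.symm)
  calc g * h * g = g * (γ * g * δ) * g := by rw [h2]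
    _ = (g * (γ * g)) * (δ * g) := by simp only [mul_assoc]
    _ = g * (δ * g) := by rw [e3]
    _ = (g * δ) * g := by rw [← mul_assoc]
    _ = g := e4

/-- Main lemma for commutativity. -/
private lemma mainXY (ω : ℕ)
    (hω : ∀ z : M, z ^ ω * z ^ ω = z ^ ω)
    (hDA : ∀ x y : M, (x * y) ^ ω * x * (x * y) ^ ω = (x * y) ^ ω)
    {e f x y p q r s c d : M}
    (he : e * e = e) (hf : f * f = f)
    (hpq : e = p * f * q) (hrs : f = r * e * s)
    (hcd : e = c * (e * (x * y) * f) * d) :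
    e * (x * y) * f = e * (y * x) * f := by
  have prem0 : e = c * e * ((x * y) * (f * d)) := by
    calc e = c * (e * (x * y) * f) * d := hcd
      _ = c * e * ((x * y) * (f * d)) := by simp only [mul_assoc]
  have s1 : e * ((x * y) * (f * d)) = e := (lemH ω hω hDA e c _ prem0).1
  have hAd : e = (e * (x * y) * f) * d := by
    calc e = e * ((x * y) * (f * d)) := s1.symm
      _ = (e * (x * y) * f) * d := by simp only [mul_assoc]
  have prem1 : f = (r * (e * (x * y))) * f * (d * s) := by
    calc f = r * e * s := hrs
      _ = r * (e * ((x * y) * (f * d))) * s := by rw [s1]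
      _ = (r * (e * (x * y))) * f * (d * s) := by simp only [mul_assoc]
  have s2 : (r * (e * (x * y))) * f = f := (lemH ω hω hDA f _ _ prem1).2
  -- e R e*y
  have prem2 : e * (x * (y * (f * d))) = e := by
    calc e * (x * (y * (f * d))) = e * ((x * y) * (f * d)) := by simp only [mul_assoc]
      _ = e := s1
  have hgS' : ∃ W : M, e = (e * y) * ((f * d) * W) := by
    refine ⟨(x * (y * (f * d))) ^ ω, ?_⟩
    have s3 := d3R ω hω hDA e x (y * (f * d)) prem2
    calc e = e * ((y * (f * d)) * (x * (y * (f * d))) ^ ω) := s3.symm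
      _ = (e * y) * ((f * d) * (x * (y * (f * d))) ^ ω) := by simp only [mul_assoc]
  obtain ⟨W, hgS⟩ := hgS'
  have hgg : (e * y) * (e * y) = e * y :=
    idemJ ω hω hDA he (show e * y = 1 * e * y by rw [one_mul])
      (show e = 1 * (e * y) * ((f * d) * W) by rw [one_mul]; exact hgS)
  -- f L x*f
  have prem3 : ((r * (e * x)) * y) * f = f := by
    calc ((r * (e * x)) * y) * f = (r * (e * (x * y))) * f := by simp only [mul_assoc]
      _ = f := s2
  have hCh' : ∃ C : M, f = C * (x * f) := by
    refine ⟨((r * (e * x)) * y) ^ ω * (r * e), ?_⟩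
    have s4 := d3L ω hω hDA f (r * (e * x)) y prem3
    calc f = (((r * (e * x)) * y) ^ ω * (r * (e * x))) * f := s4.symm
      _ = (((r * (e * x)) * y) ^ ω * (r * e)) * (x * f) := by simp only [mul_assoc]
  obtain ⟨C, hCh⟩ := hCh'
  have hhh : (x * f) * (x * f) = x * f :=
    idemJ ω hω hDA hf (show x * f = x * f * 1 by rw [mul_one])
      (show f = C * (x * f) * 1 by rw [mul_one]; exact hCh)
  -- rectangular band step
  have hgab : e * y = (p * C) * (x * f) * (q * y) := by
    conv_lhs => rw [hpq, hCh]
    simp only [mul_assoc]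
  have hhgd : x * f = (x * r) * (e * y) * (((f * d) * W) * s) := by
    conv_lhs => rw [hrs, hgS]
    simp only [mul_assoc]
  have hghg : (e * y) * (x * f) * (e * y) = e * y :=
    rbLem ω hω hDA hgg hgab hhgd
  have hBe : e = (e * (y * x) * f) * e := by
    calc e = (e * y) * ((f * d) * W) := hgS
      _ = ((e * y) * (x * f) * (e * y)) * ((f * d) * W) := by rw [hghg]
      _ = (e * (y * x) * f) * ((e * y) * ((f * d) * W)) := by simp only [mul_assoc]
      _ = (e * (y * x) * f) * e := by rw [← hgS]
  have prem4 : f = (r * (e * (y * x))) * f * (e * s) := by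
    conv_lhs => rw [hrs, hBe]
    simp only [mul_assoc]
  have s5 : (r * (e * (y * x))) * f = f := (lemH ω hω hDA f _ _ prem4).2
  have hfB : f = r * (e * (y * x) * f) := by
    calc f = (r * (e * (y * x))) * f := s5.symm
      _ = r * (e * (y * x) * f) := by simp only [mul_assoc]
  -- pairing
  have hBA : e * (y * x) * f = (e * (x * y) * f) * (d * ((y * x) * f)) := by
    conv_lhs => rw [hAd]
    simp only [mul_assoc]
  have hAB : e * (x * y) * f = ((e * (x * y)) * r) * (e * (y * x) * f) := by
    conv_lhs => rw [hfB]
    simp only [mul_assoc]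
  have premF : e * (x * y) * f
      = ((e * (x * y)) * r) * (e * (x * y) * f) * (d * ((y * x) * f)) := by
    calc e * (x * y) * f = ((e * (x * y)) * r) * (e * (y * x) * f) := hAB
      _ = ((e * (x * y)) * r) * ((e * (x * y) * f) * (d * ((y * x) * f))) := by rw [hBA]
      _ = ((e * (x * y)) * r) * (e * (x * y) * f) * (d * ((y * x) * f)) := by
          rw [← mul_assoc]
  have final := (lemH ω hω hDA (e * (x * y) * f) _ _ premF).1
  calc e * (x * y) * f = (e * (x * y) * f) * (d * ((y * x) * f)) := final.symm
    _ = e * (y * x) * f := hBA.symm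

/-- Main lemma for idempotency, case where `e*(x*x)*f` is high. -/
private lemma mainXX1 (ω : ℕ)
    (hω : ∀ z : M, z ^ ω * z ^ ω = z ^ ω)
    (hDA : ∀ x y : M, (x * y) ^ ω * x * (x * y) ^ ω = (x * y) ^ ω)
    {e f x p q r s c d : M}
    (he : e * e = e) (hf : f * f = f)
    (hpq : e = p * f * q) (hrs : f = r * e * s)
    (hcd : e = c * (e * (x * x) * f) * d) :
    e * (x * x) * f = e * x * f := by
  have prem0 : e = c * e * ((x * x) * (f * d)) := by
    calc e = c * (e * (x * x) * f) * d := hcd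
      _ = c * e * ((x * x) * (f * d)) := by simp only [mul_assoc]
  have s1 : e * ((x * x) * (f * d)) = e := (lemH ω hω hDA e c _ prem0).1
  have hBd : e = (e * (x * x) * f) * d := by
    calc e = e * ((x * x) * (f * d)) := s1.symm
      _ = (e * (x * x) * f) * d := by simp only [mul_assoc]
  have prem2 : e * (x * (x * (f * d))) = e := by
    calc e * (x * (x * (f * d))) = e * ((x * x) * (f * d)) := by simp only [mul_assoc]
      _ = e := s1
  have hAz : e = (e * x * f) * (d * (x * (x * (f * d))) ^ ω) := by
    have s3 := d3R ω hω hDA e x (x * (f * d)) prem2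
    calc e = e * ((x * (f * d)) * (x * (x * (f * d))) ^ ω) := s3.symm
      _ = (e * x * f) * (d * (x * (x * (f * d))) ^ ω) := by simp only [mul_assoc]
  have prem4 : f = (r * (e * x)) * f * ((d * (x * (x * (f * d))) ^ ω) * s) := by
    conv_lhs => rw [hrs, hAz]
    simp only [mul_assoc]
  have s5 : (r * (e * x)) * f = f := (lemH ω hω hDA f _ _ prem4).2
  have hfA : f = r * (e * x * f) := by
    calc f = (r * (e * x)) * f := s5.symm
      _ = r * (e * x * f) := by simp only [mul_assoc]
  have hAB : e * x * f = (e * (x * x) * f) * (d * (x * f)) := by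
    conv_lhs => rw [hBd]
    simp only [mul_assoc]
  have hBA : e * (x * x) * f = ((e * (x * x)) * r) * (e * x * f) := by
    conv_lhs => rw [hfA]
    simp only [mul_assoc]
  have premF : e * (x * x) * f
      = ((e * (x * x)) * r) * (e * (x * x) * f) * (d * (x * f)) := by
    calc e * (x * x) * f = ((e * (x * x)) * r) * (e * x * f) := hBA
      _ = ((e * (x * x)) * r) * ((e * (x * x) * f) * (d * (x * f))) := by rw [hAB]
      _ = ((e * (x * x)) * r) * (e * (x * x) * f) * (d * (x * f)) := by
          rw [← mul_assoc]
  have final := (lemH ω hω hDA (e * (x * x) * f) _ _ premF).1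
  exact (hAB.trans final).symm

/-- Main lemma for idempotency, case where `e*x*f` is high. -/
private lemma mainXX2 (ω : ℕ)
    (hω : ∀ z : M, z ^ ω * z ^ ω = z ^ ω)
    (hDA : ∀ x y : M, (x * y) ^ ω * x * (x * y) ^ ω = (x * y) ^ ω)
    {e f x p q r s c d : M}
    (he : e * e = e) (hf : f * f = f)
    (hpq : e = p * f * q) (hrs : f = r * e * s)
    (hcd : e = c * (e * x * f) * d) :
    e * (x * x) * f = e * x * f := by
  have prem0 : e = c * e * (x * (f * d)) := by
    calc e = c * (e * x * f) * d := hcd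
      _ = c * e * (x * (f * d)) := by simp only [mul_assoc]
  have s1 : e * (x * (f * d)) = e := (lemH ω hω hDA e c _ prem0).1
  have heg : e = (e * x) * (f * d) := by
    calc e = e * (x * (f * d)) := s1.symm
      _ = (e * x) * (f * d) := by simp only [mul_assoc]
  have hAd : e = (e * x * f) * d := by
    calc e = e * (x * (f * d)) := s1.symm
      _ = (e * x * f) * d := by simp only [mul_assoc]
  have prem1 : f = (r * (e * x)) * f * (d * s) := by
    calc f = r * e * s := hrs
      _ = r * (e * (x * (f * d))) * s := by rw [s1]
      _ = (r * (e * x)) * f * (d * s) := by simp only [mul_assoc]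
  have s2 : (r * (e * x)) * f = f := (lemH ω hω hDA f _ _ prem1).2
  have hCh : f = (r * e) * (x * f) := by
    calc f = (r * (e * x)) * f := s2.symm
      _ = (r * e) * (x * f) := by simp only [mul_assoc]
  have hgg : (e * x) * (e * x) = e * x :=
    idemJ ω hω hDA he (show e * x = 1 * e * x by rw [one_mul])
      (show e = 1 * (e * x) * (f * d) by rw [one_mul]; exact heg)
  have hhh : (x * f) * (x * f) = x * f :=
    idemJ ω hω hDA hf (show x * f = x * f * 1 by rw [mul_one])
      (show f = (r * e) * (x * f) * 1 by rw [mul_one]; exact hCh)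
  have hgab : e * x = (p * (r * e)) * (x * f) * (q * x) := by
    conv_lhs => rw [hpq, hCh]
    simp only [mul_assoc]
  have hhgd : x * f = (x * r) * (e * x) * ((f * d) * s) := by
    conv_lhs => rw [hrs, heg]
    simp only [mul_assoc]
  have hghg : (e * x) * (x * f) * (e * x) = e * x :=
    rbLem ω hω hDA hgg hgab hhgd
  have hBe : e = (e * (x * x) * f) * e := by
    calc e = (e * x) * (f * d) := heg
      _ = ((e * x) * (x * f) * (e * x)) * (f * d) := by rw [hghg]
      _ = (e * (x * x) * f) * ((e * x) * (f * d)) := by simp only [mul_assoc]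
      _ = (e * (x * x) * f) * e := by rw [← heg]
  have prem4 : f = (r * (e * (x * x))) * f * (e * s) := by
    conv_lhs => rw [hrs, hBe]
    simp only [mul_assoc]
  have s5 : (r * (e * (x * x))) * f = f := (lemH ω hω hDA f _ _ prem4).2
  have hfB : f = r * (e * (x * x) * f) := by
    calc f = (r * (e * (x * x))) * f := s5.symm
      _ = r * (e * (x * x) * f) := by simp only [mul_assoc]
  have hBA : e * (x * x) * f = (e * x * f) * (d * ((x * x) * f)) := by
    conv_lhs => rw [hAd]
    simp only [mul_assoc]
  have hAB : e * x * f = ((e * x) * r) * (e * (x * x) * f) := by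
    conv_lhs => rw [hfB]
    simp only [mul_assoc]
  have premF : e * x * f
      = ((e * x) * r) * (e * x * f) * (d * ((x * x) * f)) := by
    calc e * x * f = ((e * x) * r) * (e * (x * x) * f) := hAB
      _ = ((e * x) * r) * ((e * x * f) * (d * ((x * x) * f))) := by rw [hBA]
      _ = ((e * x) * r) * (e * x * f) * (d * ((x * x) * f)) := by rw [← mul_assoc]
  have final := (lemH ω hω hDA (e * x * f) _ _ premF).1
  calc e * (x * x) * f = (e * x * f) * (d * ((x * x) * f)) := hBA
    _ = e * x * f := final

end DA

/-- If `M ∈ DA` then the quotient `M/∼_LI` is a commutative idempotent monoid: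
the images of any `x, y` commute, and every image is idempotent. -/
theorem stmt16 [Monoid M] [Finite M] (ω : ℕ)
    (hω : ∀ z : M, z ^ ω * z ^ ω = z ^ ω)
    (hDA : ∀ x y : M, (x * y) ^ ω * x * (x * y) ^ ω = (x * y) ^ ω) :
    ∀ x y : M, simLI (x * y) (y * x) ∧ simLI (x * x) x := by
  intro x y
  constructor
  · intro e f he hf hef
    obtain ⟨⟨p, q, hpq⟩, ⟨r, s, hrs⟩⟩ := hef
    by_cases h1 : jLe e (e * (x * y) * f)
    · obtain ⟨c, d, hcd⟩ := h1
      exact Or.inr (mainXY ω hω hDA he hf hpq hrs hcd)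
    · by_cases h2 : jLe e (e * (y * x) * f)
      · obtain ⟨c, d, hcd⟩ := h2
        exact Or.inr (mainXY ω hω hDA he hf hpq hrs hcd).symm
      · refine Or.inl ⟨⟨⟨1, (x * y) * f, ?_⟩, h1⟩, ⟨⟨1, (y * x) * f, ?_⟩, h2⟩⟩
        · rw [one_mul, mul_assoc]
        · rw [one_mul, mul_assoc]
  · intro e f he hf hef
    obtain ⟨⟨p, q, hpq⟩, ⟨r, s, hrs⟩⟩ := hef
    by_cases h1 : jLe e (e * (x * x) * f)
    · obtain ⟨c, d, hcd⟩ := h1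
      exact Or.inr (mainXX1 ω hω hDA he hf hpq hrs hcd)
    · by_cases h2 : jLe e (e * x * f)
      · obtain ⟨c, d, hcd⟩ := h2
        exact Or.inr (mainXX2 ω hω hDA he hf hpq hrs hcd)
      · refine Or.inl ⟨⟨⟨1, (x * x) * f, ?_⟩, h1⟩, ⟨⟨1, x * f, ?_⟩, h2⟩⟩
        · rw [one_mul, mul_assoc]
        · rw [one_mul, mul_assoc]
end
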